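/- Fix d0 = (s0, f0, w0) ∈ ℤ³ with s0, f0, w0 all positive, and let M be a ℤ³-graded 𝔽₂[X]-module with X of degree d0. Let a, b, c, m, c0 be real numbers with a·s0 + b·w0 < f0 ≤ m·s0 (so den := b·w0 − s0·(m−a) < 0), and set a' := (m·b·w0 − f0·(m−a))/den, b' := (b·f0 − m·b·s0)/den, λ := (f0 − m·s0)/den, μ := (a·s0 + b·w0 − f0)/den, and c' := λ·c + μ·c0. Suppose M is generated as an 𝔽₂[X]-module by homogeneous elements each of whose degrees (s,f,w) satisfies both f ≤ a·s + b·w + c and f ≤ m·s + c0. Then M_{(s,f,w)} = 0 for every (s,f,w) with f > a'·s + b'·w + c', and M_{(s,f,w)} = 0 for every (s,f,w) with f > m·s + c0. -/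

import Mathlib

noncomputable def den (a b m s0 w0 : ℝ) : ℝ := b * w0 - s0 * (m - a)

noncomputable def aPrime (a b m s0 f0 w0 : ℝ) : ℝ :=
  (m * b * w0 - f0 * (m - a)) / den a b m s0 w0

noncomputable def bPrime (a b m s0 f0 w0 : ℝ) : ℝ :=
  (b * f0 - m * b * s0) / den a b m s0 w0

noncomputable def lam (a b m s0 f0 w0 : ℝ) : ℝ :=
  (f0 - m * s0) / den a b m s0 w0

noncomputable def mu (a b m s0 f0 w0 : ℝ) : ℝ :=
  (a * s0 + b * w0 - f0) / den a b m s0 w0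

noncomputable def cPrime (a b c m c0 s0 f0 w0 : ℝ) : ℝ :=
  lam a b m s0 f0 w0 * c + mu a b m s0 f0 w0 * c0

/-!
Since `(a', b', c') = λ·(a, b, c) + μ·(m, 0, c0)` with `λ, μ ≥ 0` and `λ + μ = 1`, every degree
below both given planes lies below the new plane; in particular so does every generator.
Its bounding plane contains the direction `d0` (`a'·s0 + b'·w0 = f0`), and `f0 ≤ m·s0` keeps the
half-space below `f = m·s + c0` stable under adding `d0`. Hence the sum of the graded pieces lying
in both half-spaces is stable under `X`, so it is an `𝔽₂[X]`-submodule containing the generators,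
i.e. all of `M`; independence of the pieces then kills every piece outside the two half-spaces.
-/

open Polynomial

theorem iSupIndep.eq_bot_of_biSup_eq_top {α ι : Type*} [CompleteLattice α] {t : ι → α}
    (ht : iSupIndep t) {P : ι → Prop} (hP : ⨆ i, ⨆ (_ : P i), t i = ⊤) {i : ι} (hi : ¬P i) :
    t i = ⊥ :=
  disjoint_top.1 (hP ▸ ht.disjoint_biSup (y := {j | P j}) hi)

theorem AddSubgroup.biSup_le_comap {ι M : Type*} [AddGroup M] (𝒜 : ι → AddSubgroup M)
    {P : ι → Prop} (f : M →+ M) (g : ι → ι) (hg : ∀ i, P i → P (g i))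
    (hf : ∀ i, 𝒜 i ≤ (𝒜 (g i)).comap f) :
    ⨆ i, ⨆ (_ : P i), 𝒜 i ≤ (⨆ i, ⨆ (_ : P i), 𝒜 i).comap f :=
  iSup₂_le fun i hi => (hf i).trans <| AddSubgroup.comap_mono <|
    le_iSup₂ (f := fun j (_ : P j) => 𝒜 j) (g i) (hg i hi)

theorem AddSubgroup.eq_top_of_smul_mem_of_span_eq_top {R M : Type*} [Ring R] [AddCommGroup M]
    [Module R M] (S : AddSubgroup M) (hS : ∀ (r : R) {x : M}, x ∈ S → r • x ∈ S) {s : Set M}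
    (hs : Submodule.span R s = ⊤) (hsS : s ⊆ S) : S = ⊤ := by
  let N : Submodule R M := { S with smul_mem' := fun r _ hx => hS r hx }
  have hN : N = ⊤ := eq_top_iff.2 (hs ▸ Submodule.span_le.2 hsS)
  exact eq_top_iff.2 fun x _ => show x ∈ N from hN ▸ Submodule.mem_top

theorem AddSubgroup.smul_mem_of_X_smul_mem {n : ℕ} {M : Type*} [AddCommGroup M]
    [Module (ZMod n)[X] M] (S : AddSubgroup M) (hX : ∀ {x : M}, x ∈ S → (X : (ZMod n)[X]) • x ∈ S)
    (p : (ZMod n)[X]) {x : M} (hx : x ∈ S) : p • x ∈ S := by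
  have hXpow : ∀ k {y : M}, y ∈ S → (X : (ZMod n)[X]) ^ k • y ∈ S := by
    intro k
    induction k with
    | zero => simp
    | succ k ih => exact fun hy => by rw [pow_succ, mul_smul]; exact ih (hX hy)
  induction p using Polynomial.induction_on' with
  | add p q hp hq => rw [add_smul]; exact add_mem hp hq
  | monomial k r =>
    -- Every constant of `ZMod n` is an integer, so it acts as a `zsmul`.
    rw [← C_mul_X_pow_eq_monomial, mul_smul, ← ZMod.intCast_zmod_cast r, map_intCast,
      Int.cast_smul_eq_zsmul]
    exact zsmul_mem (hXpow k hx) _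

-- `d = (s, f, w)` lies on or below the plane `f = a·s + b·w + c`.
def BelowPlane (a b c : ℝ) (d : ℤ × ℤ × ℤ) : Prop :=
  (d.2.1 : ℝ) ≤ a * d.1 + b * d.2.2 + c

theorem BelowPlane.shift {a b c : ℝ} {s0 f0 w0 : ℤ} (h : (f0 : ℝ) ≤ a * s0 + b * w0)
    {d : ℤ × ℤ × ℤ} (hd : BelowPlane a b c d) :
    BelowPlane a b c (d.1 + s0, d.2.1 + f0, d.2.2 + w0) := by
  unfold BelowPlane at *
  push_cast
  linarith

theorem BelowPlane.convex_comb {a b c a₂ b₂ c₂ l u : ℝ} {d : ℤ × ℤ × ℤ} (hl : 0 ≤ l) (hu : 0 ≤ u)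
    (hlu : l + u = 1) (h : BelowPlane a b c d) (h₂ : BelowPlane a₂ b₂ c₂ d) :
    BelowPlane (l * a + u * a₂) (l * b + u * b₂) (l * c + u * c₂) d := by
  unfold BelowPlane at *
  have hf : (d.2.1 : ℝ) = l * d.2.1 + u * d.2.1 := by rw [← add_mul, hlu, one_mul]
  linarith [mul_le_mul_of_nonneg_left h hl, mul_le_mul_of_nonneg_left h₂ hu]

section NewPlane

variable {a b c m c0 s0 f0 w0 : ℝ}

theorem den_neg (h1 : a * s0 + b * w0 < f0) (h2 : f0 ≤ m * s0) : den a b m s0 w0 < 0 := by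
  unfold den
  linarith

theorem lam_nonneg (hden : den a b m s0 w0 < 0) (h2 : f0 ≤ m * s0) : 0 ≤ lam a b m s0 f0 w0 :=
  div_nonneg_of_nonpos (by linarith) hden.le

theorem mu_nonneg (hden : den a b m s0 w0 < 0) (h1 : a * s0 + b * w0 < f0) :
    0 ≤ mu a b m s0 f0 w0 :=
  div_nonneg_of_nonpos (by linarith) hden.le

theorem lam_add_mu (hden : den a b m s0 w0 ≠ 0) : lam a b m s0 f0 w0 + mu a b m s0 f0 w0 = 1 := by
  rw [lam, mu, ← add_div, div_eq_one_iff_eq hden, den]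
  ring

theorem aPrime_eq (hden : den a b m s0 w0 ≠ 0) :
    aPrime a b m s0 f0 w0 = lam a b m s0 f0 w0 * a + mu a b m s0 f0 w0 * m := by
  unfold aPrime lam mu
  field_simp
  ring

theorem bPrime_eq : bPrime a b m s0 f0 w0 = lam a b m s0 f0 w0 * b + mu a b m s0 f0 w0 * 0 := by
  unfold bPrime lam
  ring

theorem aPrime_mul_add_bPrime_mul (hden : den a b m s0 w0 ≠ 0) :
    aPrime a b m s0 f0 w0 * s0 + bPrime a b m s0 f0 w0 * w0 = f0 := by
  unfold aPrime bPrime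
  field_simp
  unfold den
  ring

theorem BelowPlane.aPrime_bPrime_cPrime (h1 : a * s0 + b * w0 < f0) (h2 : f0 ≤ m * s0)
    {d : ℤ × ℤ × ℤ} (h : BelowPlane a b c d) (h₂ : BelowPlane m 0 c0 d) :
    BelowPlane (aPrime a b m s0 f0 w0) (bPrime a b m s0 f0 w0) (cPrime a b c m c0 s0 f0 w0) d := by
  have hden := den_neg h1 h2
  rw [aPrime_eq hden.ne, bPrime_eq, cPrime]
  exact h.convex_comb (lam_nonneg hden h2) (mu_nonneg hden h1) (lam_add_mu hden.ne) h₂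

end NewPlane

theorem graded_module_vanishing_new_plane_general
    (s0 f0 w0 : ℤ)
    (M : Type) [AddCommGroup M] [Module (Polynomial (ZMod 2)) M]
    (𝒜 : ℤ × ℤ × ℤ → AddSubgroup M)
    (hdecomp : DirectSum.IsInternal 𝒜)
    (hX : ∀ (d : ℤ × ℤ × ℤ) (x : M), x ∈ 𝒜 d →
      (Polynomial.X : Polynomial (ZMod 2)) • x ∈ 𝒜 (d.1 + s0, d.2.1 + f0, d.2.2 + w0))
    (a b c m c0 : ℝ)
    (h1 : a * s0 + b * w0 < (f0 : ℝ)) (h2 : (f0 : ℝ) ≤ m * s0)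
    (hgen : Submodule.span (Polynomial (ZMod 2))
      {x : M | ∃ s f w : ℤ, x ∈ 𝒜 (s, f, w) ∧
        (f : ℝ) ≤ a * s + b * w + c ∧ (f : ℝ) ≤ m * s + c0} = ⊤) :
    (∀ s f w : ℤ,
        (f : ℝ) > aPrime a b m s0 f0 w0 * s + bPrime a b m s0 f0 w0 * w +
          cPrime a b c m c0 s0 f0 w0 →
        𝒜 (s, f, w) = ⊥) ∧
      (∀ s f w : ℤ, (f : ℝ) > m * s + c0 → 𝒜 (s, f, w) = ⊥) := by
  set P : ℤ × ℤ × ℤ → Prop := fun d =>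
    BelowPlane (aPrime a b m s0 f0 w0) (bPrime a b m s0 f0 w0) (cPrime a b c m c0 s0 f0 w0) d ∧
      BelowPlane m 0 c0 d
  set S : AddSubgroup M := ⨆ d, ⨆ (_ : P d), 𝒜 d
  have hshift (d : ℤ × ℤ × ℤ) (hd : P d) : P (d.1 + s0, d.2.1 + f0, d.2.2 + w0) :=
    ⟨hd.1.shift (aPrime_mul_add_bPrime_mul (den_neg h1 h2).ne).ge, hd.2.shift (by linarith)⟩
  have hXS : S ≤ S.comap (DistribSMul.toAddMonoidHom M X) :=
    AddSubgroup.biSup_le_comap 𝒜 _ _ hshift fun d x hx => hX d x hx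
  have hgenS : {x : M | ∃ s f w : ℤ, x ∈ 𝒜 (s, f, w) ∧
      (f : ℝ) ≤ a * s + b * w + c ∧ (f : ℝ) ≤ m * s + c0} ⊆ S := by
    rintro x ⟨s, f, w, hx, ha, hm⟩
    have hm' : BelowPlane m 0 c0 (s, f, w) := by simpa [BelowPlane] using hm
    exact le_iSup₂ (f := fun d (_ : P d) => 𝒜 d) (s, f, w)
      ⟨BelowPlane.aPrime_bPrime_cPrime h1 h2 ha hm', hm'⟩ hx
  have hS : S = ⊤ := S.eq_top_of_smul_mem_of_span_eq_top
    (fun p _ hx => S.smul_mem_of_X_smul_mem (fun hy => hXS hy) p hx) hgen hgenS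
  have hvanish {d : ℤ × ℤ × ℤ} (hd : ¬P d) : 𝒜 d = ⊥ :=
    hdecomp.addSubgroup_iSupIndep.eq_bot_of_biSup_eq_top hS hd
  refine ⟨fun s f w hf => hvanish fun hd => hf.not_ge hd.1,
    fun s f w hf => hvanish fun hd => hf.not_ge ?_⟩
  simpa [BelowPlane] using hd.2

/-- case (2) of Theorem 4.7, module-theoretic content: let `M` be
a `ℤ³`-graded `𝔽₂[X]`-module with `X` of degree `d0 = (s0,f0,w0)`,
`s0,f0,w0 > 0`, generated by homogeneous elements whose degrees lie below the
planes `f = a·s + b·w + c` and `f = m·s + c0`, where `a·s0 + b·w0 < f0 ≤ m·s0`.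
Then `M_{(s,f,w)} = 0` whenever `f > a'·s + b'·w + c'`, and whenever
`f > m·s + c0`. -/
theorem graded_module_vanishing_new_plane
    (s0 f0 w0 : ℤ) (hs0 : 0 < s0) (hf0 : 0 < f0) (hw0 : 0 < w0)
    (M : Type) [AddCommGroup M] [Module (Polynomial (ZMod 2)) M]
    (𝒜 : ℤ × ℤ × ℤ → AddSubgroup M)
    (hdecomp : DirectSum.IsInternal 𝒜)
    (hX : ∀ (d : ℤ × ℤ × ℤ) (x : M), x ∈ 𝒜 d →
      (Polynomial.X : Polynomial (ZMod 2)) • x ∈ 𝒜 (d.1 + s0, d.2.1 + f0, d.2.2 + w0))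
    (a b c m c0 : ℝ)
    (h1 : a * s0 + b * w0 < (f0 : ℝ)) (h2 : (f0 : ℝ) ≤ m * s0)
    (hgen : Submodule.span (Polynomial (ZMod 2))
      {x : M | ∃ s f w : ℤ, x ∈ 𝒜 (s, f, w) ∧
        (f : ℝ) ≤ a * s + b * w + c ∧ (f : ℝ) ≤ m * s + c0} = ⊤) :
    (∀ s f w : ℤ,
        (f : ℝ) > aPrime a b m s0 f0 w0 * s + bPrime a b m s0 f0 w0 * w +
          cPrime a b c m c0 s0 f0 w0 →
        𝒜 (s, f, w) = ⊥) ∧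
      (∀ s f w : ℤ, (f : ℝ) > m * s + c0 → 𝒜 (s, f, w) = ⊥) :=
  graded_module_vanishing_new_plane_general s0 f0 w0 M 𝒜 hdecomp hX a b c m c0 h1 h2 hgen
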